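/- Let n ≥ 5. There exist ε₀ > 0 and a constant C > 0 depending only on n and ε₀ such that for every p on the critical hyperbola with |p − 1| ≤ ε₀ and q = q(p), the ground state (U_p, V_p) satisfies U_p(x) ≤ 1 and V_p(x) ≤ C for all x ∈ ℝⁿ. -/

import Mathlib

/-!
`U ≤ 1` is radial monotonicity together with `U 0 = 1`. For `V`, pass to the radial profiles
`f`, `g`, which satisfy `(r^(n-1) f')' = -r^(n-1) g^p` and `(r^(n-1) g')' = -r^(n-1) f^q`.
Since `f ≤ 1`, the second equation gives `g' ≥ -r`, so `g ≥ g 0 / 2` on `[0, √(g 0)]`. Fed into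
the first equation, this forces `f` to drop by `(g 0 / 2)^p g 0 / (n 2^(n-1))` between `√(g 0)`
and `2 √(g 0)`; as `0 < f ≤ 1`, that drop is less than `1`, which bounds `V 0 = g 0`.
-/

open Filter MeasureTheory Topology

noncomputable def lap {n : ℕ} (f : EuclideanSpace ℝ (Fin n) → ℝ)
    (x : EuclideanSpace ℝ (Fin n)) : ℝ :=
  ∑ i, fderiv ℝ (fderiv ℝ f) x (EuclideanSpace.single i 1) (EuclideanSpace.single i 1)

def IsGroundState (n : ℕ) (p q : ℝ) (U V : EuclideanSpace ℝ (Fin n) → ℝ) : Prop :=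
  ContDiff ℝ 2 U ∧ ContDiff ℝ 2 V ∧
  (∀ x, 0 < U x) ∧ (∀ x, 0 < V x) ∧
  (∀ x, -lap U x = V x ^ p) ∧ (∀ x, -lap V x = U x ^ q) ∧
  (∀ x y, ‖x‖ ≤ ‖y‖ → U y ≤ U x) ∧
  (∀ x y, ‖x‖ ≤ ‖y‖ → V y ≤ V x) ∧
  Tendsto U (cocompact _) (nhds 0) ∧
  Tendsto V (cocompact _) (nhds 0) ∧
  U 0 = 1

open Set

theorem sub_le_sub_of_hasDerivAt_le {F G F' G' : ℝ → ℝ} {a b : ℝ} (hab : a ≤ b)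
    (hF : ContinuousOn F (Icc a b)) (hG : ContinuousOn G (Icc a b))
    (hF' : ∀ x ∈ Ioo a b, HasDerivAt F (F' x) x) (hG' : ∀ x ∈ Ioo a b, HasDerivAt G (G' x) x)
    (hle : ∀ x ∈ Ioo a b, F' x ≤ G' x) : F b - F a ≤ G b - G a := by
  have hmono : MonotoneOn (G - F) (Icc a b) := by
    refine monotoneOn_of_hasDerivWithinAt_nonneg (convex_Icc a b) (hG.sub hF) (f' := G' - F')
      ?_ ?_ <;> rw [interior_Icc] <;> intro x hx
    · exact ((hG' x hx).sub (hF' x hx)).hasDerivWithinAt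
    · exact sub_nonneg.2 (hle x hx)
  have := hmono (left_mem_Icc.2 hab) (right_mem_Icc.2 hab) hab
  simp only [Pi.sub_apply] at this
  linarith

section LineDerivatives

variable {E F : Type*} [NormedAddCommGroup E] [NormedSpace ℝ E]
  [NormedAddCommGroup F] [NormedSpace ℝ F]

theorem hasDerivAt_apply_add_smul {Φ : E → F} (hΦ : Differentiable ℝ Φ) (a b : E) (t : ℝ) :
    HasDerivAt (fun s : ℝ => Φ (a + s • b)) (fderiv ℝ Φ (a + t • b) b) t := by
  have hline : HasDerivAt (fun s : ℝ => a + s • b) b t := by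
    simpa using ((hasDerivAt_id t).smul_const b).const_add a
  exact (hΦ _).hasFDerivAt.comp_hasDerivAt t hline

variable {U : E → ℝ}

theorem hasDerivAt_fderiv_apply_add_smul (hU : ContDiff ℝ 2 U) (a b : E) (t : ℝ) :
    HasDerivAt (fun s : ℝ => fderiv ℝ U (a + s • b) b)
      (fderiv ℝ (fderiv ℝ U) (a + t • b) b b) t := by
  simpa using (hasDerivAt_apply_add_smul
    ((hU.fderiv_right one_add_one_eq_two.le).differentiable_one) a b t).clm_apply
    (hasDerivAt_const t b)

theorem deriv_deriv_apply_smul (hU : ContDiff ℝ 2 U) (e : E) (s : ℝ) :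
    deriv (deriv fun r : ℝ => U (r • e)) s = fderiv ℝ (fderiv ℝ U) (s • e) e e := by
  have hd : deriv (fun r : ℝ => U (r • e)) = fun r => fderiv ℝ U (r • e) e := by
    funext r
    simpa using (hasDerivAt_apply_add_smul (hU.differentiable two_ne_zero) 0 e r).deriv
  simpa [hd] using (hasDerivAt_fderiv_apply_add_smul hU 0 e s).deriv

theorem ContDiff.comp_smul_const {m : WithTop ℕ∞} (hU : ContDiff ℝ m U) (e : E) :
    ContDiff ℝ m fun r : ℝ => U (r • e) :=
  hU.comp (contDiff_id.smul contDiff_const)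

end LineDerivatives

theorem fderiv_fderiv_apply_of_radial {E : Type*} [NormedAddCommGroup E] [InnerProductSpace ℝ E]
    {U : E → ℝ} (hU : ContDiff ℝ 2 U)
    (hrad : ∀ x y, ‖x‖ = ‖y‖ → U x = U y) {e e' : E} (he : ‖e‖ = 1) (he' : ‖e'‖ = 1)
    (horth : inner ℝ e e' = 0) {s : ℝ} (hs : 0 < s) :
    fderiv ℝ (fderiv ℝ U) (s • e) e' e' = deriv (fun r : ℝ => U (r • e)) s / s := by
  set f : ℝ → ℝ := fun r => U (r • e)
  set ρ : ℝ → ℝ := fun t => Real.sqrt (s ^ 2 + t ^ 2)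
  have hsq_pos : ∀ t : ℝ, 0 < s ^ 2 + t ^ 2 := fun t => by positivity
  have hρ_pos : ∀ t, 0 < ρ t := fun t => Real.sqrt_pos.2 (hsq_pos t)
  have hρ0 : ρ 0 = s := by simp [ρ, hs.le]
  have hρ' : ∀ t, HasDerivAt ρ (t / ρ t) t := fun t => by
    convert ((hasDerivAt_pow 2 t).const_add (s ^ 2)).sqrt (hsq_pos t).ne' using 1
    simp only [ρ]
    field_simp
    ring
  -- `U` restricted to the line `s • e + ℝ e'` is the profile `f` composed with the distance `ρ`
  have hline : (fun t : ℝ => U (s • e + t • e')) = f ∘ ρ := by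
    funext t
    refine hrad _ _ ?_
    have hsq : ‖s • e + t • e'‖ ^ 2 = s ^ 2 + t ^ 2 := by
      rw [norm_add_sq_real, norm_smul, norm_smul, real_inner_smul_left, real_inner_smul_right,
        horth, he, he']
      simp [sq_abs]
    rw [norm_smul, he, mul_one, Real.norm_of_nonneg (hρ_pos t).le]
    exact (Real.sqrt_eq_iff_eq_sq (hsq_pos t).le (norm_nonneg _)).2 hsq.symm |>.symm
  have hf' : Differentiable ℝ (deriv f) := (hU.comp_smul_const e).deriv'.differentiable_one
  set φ : ℝ → ℝ := fun t => deriv f (ρ t) / ρ t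
  have hfirst : (fun t : ℝ => fderiv ℝ U (s • e + t • e') e') = fun t => t * φ t := by
    funext t
    have h₁ := hasDerivAt_apply_add_smul (hU.differentiable two_ne_zero) (s • e) e' t
    have h₂ : HasDerivAt (f ∘ ρ) (deriv f (ρ t) * (t / ρ t)) t :=
      ((hU.comp_smul_const e).differentiable two_ne_zero _).hasDerivAt.comp t (hρ' t)
    rw [hline] at h₁
    rw [h₁.unique h₂]
    ring
  have hφ : HasDerivAt φ (deriv φ 0) 0 :=
    (((hf' _).comp 0 (hρ' 0).differentiableAt).div (hρ' 0).differentiableAt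
      (hρ_pos 0).ne').hasDerivAt
  have h₂ := hasDerivAt_fderiv_apply_add_smul hU (s • e) e' 0
  rw [hfirst, zero_smul, add_zero] at h₂
  rw [h₂.unique ((hasDerivAt_id' 0).mul hφ)]
  simp [φ, hρ0]

section Laplacian

variable {n : ℕ} {U : EuclideanSpace ℝ (Fin n) → ℝ}

theorem lap_smul_single_of_radial (hU : ContDiff ℝ 2 U)
    (hrad : ∀ x y, ‖x‖ = ‖y‖ → U x = U y) (i : Fin n) {s : ℝ} (hs : 0 < s) :
    lap U (s • EuclideanSpace.single i 1) =
      deriv (deriv fun r : ℝ => U (r • EuclideanSpace.single i 1)) s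
        + (n - 1) * (deriv (fun r : ℝ => U (r • EuclideanSpace.single i 1)) s / s) := by
  have hON := EuclideanSpace.orthonormal_single (𝕜 := ℝ) (ι := Fin n)
  rw [lap, ← Finset.add_sum_erase _ _ (Finset.mem_univ i), deriv_deriv_apply_smul hU,
    Finset.sum_congr rfl fun j hj => fderiv_fderiv_apply_of_radial hU hrad (hON.norm_eq_one i)
      (hON.norm_eq_one j) (hON.inner_eq_zero (Finset.ne_of_mem_erase hj).symm) hs]
  simp [Finset.card_erase_of_mem, Nat.cast_pred i.pos]

theorem hasDerivAt_pow_mul_deriv {f : ℝ → ℝ} (hf : ContDiff ℝ 2 f) (k : ℕ) {s : ℝ} (hs : s ≠ 0) :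
    HasDerivAt (fun r => r ^ k * deriv f r)
      (s ^ k * (deriv (deriv f) s + k * (deriv f s / s))) s := by
  refine ((hasDerivAt_pow k s).mul (hf.deriv'.differentiable_one s).hasDerivAt).congr_deriv ?_
  rcases k with _ | k
  · simp
  · simp only [pow_succ, Nat.add_sub_cancel]
    field_simp
    push_cast
    ring

theorem hasDerivAt_pow_mul_deriv_of_neg_lap_eq {W : EuclideanSpace ℝ (Fin n) → ℝ}
    (hU : ContDiff ℝ 2 U) (hrad : ∀ x y, ‖x‖ = ‖y‖ → U x = U y) (hW : ∀ x, -lap U x = W x)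
    (i : Fin n) {s : ℝ} (hs : 0 < s) :
    HasDerivAt (fun r => r ^ (n - 1) * deriv (fun r : ℝ => U (r • EuclideanSpace.single i 1)) r)
      (-(s ^ (n - 1) * W (s • EuclideanSpace.single i 1))) s := by
  refine (hasDerivAt_pow_mul_deriv (hU.comp_smul_const _) (n - 1) hs.ne').congr_deriv ?_
  rw [← hW, lap_smul_single_of_radial hU hrad i hs, Nat.cast_pred i.pos]
  ring

end Laplacian

section RadialSystem

variable {k : ℕ} {f g h : ℝ → ℝ}

theorem hasDerivAt_pow_succ_div (k : ℕ) (x : ℝ) :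
    HasDerivAt (fun r : ℝ => r ^ (k + 1) / (k + 1)) (x ^ k) x := by
  refine ((hasDerivAt_pow (k + 1) x).div_const _).congr_deriv ?_
  push_cast
  field_simp

theorem neg_le_deriv_of_hasDerivAt_pow_mul_deriv (hk : k ≠ 0) (hg : ContDiff ℝ 1 g)
    (hode : ∀ s, 0 < s → HasDerivAt (fun r => r ^ k * deriv g r) (-(s ^ k * h s)) s)
    (hh : ∀ s, 0 < s → h s ≤ 1) {s : ℝ} (hs : 0 < s) : -s ≤ deriv g s := by
  have hcmp := sub_le_sub_of_hasDerivAt_le (F := fun r => -(r ^ (k + 1) / (k + 1)))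
    (G := fun r => r ^ k * deriv g r) hs.le
    (by fun_prop) ((continuous_pow k).mul hg.continuous_deriv_one).continuousOn
    (fun x _ => (hasDerivAt_pow_succ_div k x).neg) (fun x hx => hode x hx.1) fun x hx => by
      nlinarith [hh x hx.1, pow_pos hx.1 k]
  simp only [zero_pow hk, zero_pow (Nat.succ_ne_zero k), zero_div, neg_zero, zero_mul,
    sub_zero] at hcmp
  have hk1 : (1 : ℝ) ≤ k + 1 := by simp
  have : s ^ k * -s ≤ s ^ k * deriv g s := by
    calc s ^ k * -s = -(s ^ (k + 1)) := by ring
      _ ≤ -(s ^ (k + 1) / (k + 1)) := neg_le_neg (div_le_self (by positivity) hk1)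
      _ ≤ _ := hcmp
  exact le_of_mul_le_mul_left this (pow_pos hs k)

theorem sub_sq_div_two_le (hg : Differentiable ℝ g) (hg' : ∀ s, 0 < s → -s ≤ deriv g s)
    {s : ℝ} (hs : 0 ≤ s) : g 0 - s ^ 2 / 2 ≤ g s := by
  have hsq : ∀ x : ℝ, HasDerivAt (fun r : ℝ => -(r ^ 2 / 2)) (-x) x := fun x => by
    refine ((hasDerivAt_pow 2 x).div_const 2).neg.congr_deriv ?_
    norm_num
  have := sub_le_sub_of_hasDerivAt_le (F := fun r => -(r ^ 2 / 2)) hs (by fun_prop)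
    hg.continuous.continuousOn (fun x _ => hsq x) (fun x _ => (hg x).hasDerivAt)
    fun x hx => hg' x hx.1
  linarith

theorem le_sub_of_hasDerivAt_pow_mul_deriv (hk : k ≠ 0) (hf : ContDiff ℝ 1 f)
    (hode : ∀ s, 0 < s → HasDerivAt (fun r => r ^ k * deriv f r) (-(s ^ k * h s)) s)
    (hh : ∀ s, 0 < s → 0 ≤ h s) {m r₀ : ℝ} (hm : 0 ≤ m) (hr₀ : 0 < r₀)
    (hmh : ∀ s ∈ Ioo 0 r₀, m ≤ h s) :
    f (2 * r₀) ≤ f r₀ - m * r₀ ^ 2 / ((k + 1) * 2 ^ k) := by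
  have hflux : Continuous fun r => r ^ k * deriv f r :=
    (continuous_pow k).mul hf.continuous_deriv_one
  have hflux_r₀ : r₀ ^ k * deriv f r₀ ≤ -(m * (r₀ ^ (k + 1) / (k + 1))) := by
    have := sub_le_sub_of_hasDerivAt_le (G := fun r => -(m * (r ^ (k + 1) / (k + 1))))
      hr₀.le hflux.continuousOn (by fun_prop) (fun x hx => hode x hx.1)
      (fun x _ => ((hasDerivAt_pow_succ_div k x).const_mul m).neg) fun x hx => by
        nlinarith [hmh x hx, pow_pos hx.1 k]
    simpa [zero_pow hk] using this
  set c := m * r₀ / ((k + 1) * 2 ^ k)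
  have hderiv : ∀ x ∈ Ioo r₀ (2 * r₀), deriv f x ≤ -c := fun x hrx => by
    have hx : 0 < x := hr₀.trans hrx.1
    have hanti := sub_le_sub_of_hasDerivAt_le (F := fun r => r ^ k * deriv f r)
      (G := fun _ => (0 : ℝ)) hrx.1.le
      hflux.continuousOn continuousOn_const (fun y hy => hode y (hr₀.trans hy.1))
      (fun y _ => hasDerivAt_const y 0) fun y hy =>
        neg_nonpos.2 (mul_nonneg (pow_pos (hr₀.trans hy.1) k).le (hh y (hr₀.trans hy.1)))
    have hxk : x ^ k ≤ 2 ^ k * r₀ ^ k := by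
      rw [← mul_pow]; exact pow_le_pow_left₀ hx.le hrx.2.le k
    refine le_of_mul_le_mul_left ?_ (pow_pos hx k)
    calc x ^ k * deriv f x ≤ -(m * (r₀ ^ (k + 1) / (k + 1))) := by linarith
      _ = -(c * (2 ^ k * r₀ ^ k)) := by simp only [c]; field_simp; ring
      _ ≤ x ^ k * -c := by nlinarith [show 0 ≤ c by positivity]
  have := sub_le_sub_of_hasDerivAt_le (G := fun r => -c * r) (by linarith : r₀ ≤ 2 * r₀)
    hf.continuous.continuousOn (by fun_prop)
    (fun x _ => (hf.differentiable_one x).hasDerivAt)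
    (fun x _ => by simpa using (hasDerivAt_id x).const_mul (-c)) hderiv
  have hc : c * r₀ = m * r₀ ^ 2 / ((k + 1) * 2 ^ k) := by simp only [c]; ring
  linarith

theorem lt_of_half_rpow_mul_lt {p x N : ℝ} (hp : 0 ≤ p) (hx : 0 < x) (h : (x / 2) ^ p * x < N)
    (hN : 2 ≤ N) : x < N := by
  by_contra! hNx
  have : 1 ≤ (x / 2) ^ p := Real.one_le_rpow (by linarith) hp
  nlinarith

theorem radial_lane_emden_apply_zero_lt {p q : ℝ} (hk : k ≠ 0) (hp : 0 ≤ p) (hq : 0 ≤ q)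
    (hf : ContDiff ℝ 1 f) (hg : ContDiff ℝ 1 g)
    (hf_pos : ∀ r, 0 < f r) (hf_le : ∀ r, f r ≤ 1) (hg_pos : ∀ r, 0 < g r)
    (hf' : ∀ s, 0 < s → HasDerivAt (fun r => r ^ k * deriv f r) (-(s ^ k * g s ^ p)) s)
    (hg' : ∀ s, 0 < s → HasDerivAt (fun r => r ^ k * deriv g r) (-(s ^ k * f s ^ q)) s) :
    g 0 < (k + 1) * 2 ^ k := by
  set r₀ := Real.sqrt (g 0)
  have hr₀ : 0 < r₀ := Real.sqrt_pos.2 (hg_pos 0)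
  have hr₀_sq : r₀ ^ 2 = g 0 := Real.sq_sqrt (hg_pos 0).le
  have hg_lower : ∀ s, 0 ≤ s → g 0 - s ^ 2 / 2 ≤ g s :=
    fun s => sub_sq_div_two_le hg.differentiable_one fun s =>
      neg_le_deriv_of_hasDerivAt_pow_mul_deriv hk hg hg'
        (fun s _ => Real.rpow_le_one (hf_pos s).le (hf_le s) hq)
  have hg_half : ∀ s ∈ Ioo 0 r₀, (g 0 / 2) ^ p ≤ g s ^ p := fun s hs => by
    refine Real.rpow_le_rpow (by linarith [hg_pos 0]) ?_ hp
    nlinarith [hg_lower s hs.1.le, hs.1, hs.2]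
  have hdecay := le_sub_of_hasDerivAt_pow_mul_deriv hk hf hf'
    (fun s _ => Real.rpow_nonneg (hg_pos s).le p) (Real.rpow_nonneg (by linarith [hg_pos 0]) p)
    hr₀ hg_half
  rw [hr₀_sq] at hdecay
  have hN : (0 : ℝ) < (k + 1) * 2 ^ k := by positivity
  refine lt_of_half_rpow_mul_lt hp (hg_pos 0) ?_ ?_
  · have : (g 0 / 2) ^ p * g 0 / ((k + 1) * 2 ^ k) < 1 := by
      linarith [hf_pos (2 * r₀), hf_le r₀]
    rwa [div_lt_one hN] at this
  · have hk1 : (1 : ℝ) ≤ k := by exact_mod_cast Nat.one_le_iff_ne_zero.2 hk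
    nlinarith [one_le_pow₀ (M₀ := ℝ) (a := 2) one_le_two (n := k)]

end RadialSystem

namespace IsGroundState

variable {n : ℕ} {p q : ℝ} {U V : EuclideanSpace ℝ (Fin n) → ℝ}

theorem fst_le_one (h : IsGroundState n p q U V) (x : EuclideanSpace ℝ (Fin n)) : U x ≤ 1 := by
  obtain ⟨-, -, -, -, -, -, hU, -, -, -, hU0⟩ := h
  exact hU0 ▸ hU 0 x (by simp)

theorem snd_le_snd_zero (h : IsGroundState n p q U V) (x : EuclideanSpace ℝ (Fin n)) :
    V x ≤ V 0 :=
  h.2.2.2.2.2.2.2.1 0 x (by simp)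

theorem snd_zero_lt (h : IsGroundState n p q U V) (hn : 2 ≤ n) (hp : 0 ≤ p) (hq : 0 ≤ q) :
    V 0 < n * 2 ^ (n - 1) := by
  have hU_le := h.fst_le_one
  obtain ⟨hU, hV, hU_pos, hV_pos, hUV, hVU, hU_mono, hV_mono, -, -, -⟩ := h
  have hrad {W : EuclideanSpace ℝ (Fin n) → ℝ} (hW : ∀ x y, ‖x‖ ≤ ‖y‖ → W y ≤ W x) x y
      (hxy : ‖x‖ = ‖y‖) : W x = W y :=
    le_antisymm (hW y x hxy.ge) (hW x y hxy.le)
  let e := EuclideanSpace.single (⟨0, by omega⟩ : Fin n) (1 : ℝ)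
  have := radial_lane_emden_apply_zero_lt (f := fun r => U (r • e)) (g := fun r => V (r • e))
    (by omega) hp hq (hU.comp_smul_const e).of_succ (hV.comp_smul_const e).of_succ
    (fun r => hU_pos _) (fun r => hU_le _) (fun r => hV_pos _)
    (fun s hs => hasDerivAt_pow_mul_deriv_of_neg_lap_eq hU (hrad hU_mono) hUV _ hs)
    (fun s hs => hasDerivAt_pow_mul_deriv_of_neg_lap_eq hV (hrad hV_mono) hVU _ hs)
  rwa [zero_smul, Nat.cast_pred (by omega), sub_add_cancel] at this

end IsGroundState

theorem uniform_bound_near_one (n : ℕ) (hn : 5 ≤ n) :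
    ∃ ε₀ : ℝ, 0 < ε₀ ∧ ∃ C : ℝ, 0 < C ∧
      ∀ p q : ℝ, 0 < p → 0 < q →
        1 / (p + 1) + 1 / (q + 1) = ((n : ℝ) - 2) / n →
        |p - 1| ≤ ε₀ →
        ∀ U V : EuclideanSpace ℝ (Fin n) → ℝ, IsGroundState n p q U V →
          (∀ x, U x ≤ 1) ∧ (∀ x, V x ≤ C) := by
  refine ⟨1, one_pos, n * 2 ^ (n - 1), by positivity, ?_⟩
  intro p q hp hq _ _ U V h
  exact ⟨h.fst_le_one, fun x =>
    (h.snd_le_snd_zero x).trans (h.snd_zero_lt (by omega) hp.le hq.le).le⟩
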